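/- Let S be a 1-synchronizable system, τ ∈ Tr₀(S), and messages a₁,…,a_n, b₁,…,b_m with src(a_i) ≠ src(b_j) for all i,j, such that τ·!?a₁⋯!?a_n ∈ Tr₀(S) and τ·!?b₁⋯!?b_m ∈ Tr₀(S). Then for every shuffle c₁⋯c_{n+m} of a₁⋯a_n with b₁⋯b_m, τ·!?c₁⋯!?c_{n+m} ∈ Tr₀(S), and it is S-equivalent to τ·!?a₁⋯!?a_n·!?b₁⋯!?b_m. -/

import Mathlib

/-! Communicating finite state machines: messages, traces, systems. -/

structure MessageSet where
  msgs : Finset ℕ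
  p : ℕ
  src : ℕ → ℕ
  dst : ℕ → ℕ

def MessageSet.WF (M : MessageSet) : Prop :=
  1 ≤ M.p ∧ ∀ a ∈ M.msgs, M.src a ≠ M.dst a ∧ M.src a < M.p ∧ M.dst a < M.p

inductive Act where
  | send (a : ℕ)
  | recv (a : ℕ)
deriving DecidableEq

abbrev Trace := List Act

def Act.msg : Act → ℕ
  | .send a => a
  | .recv a => a

def peerOf (M : MessageSet) : Act → ℕ
  | .send a => M.src a
  | .recv a => M.dst a

/-- Send projection: the sequence of messages sent in a trace. -/
def sendProj (τ : Trace) : List ℕ :=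
  τ.filterMap (fun α => match α with | .send a => some a | .recv _ => none)

/-- Projection of a trace on the actions of peer `i`. -/
def projPeer (M : MessageSet) (i : ℕ) (τ : Trace) : Trace :=
  τ.filter (fun α => peerOf M α = i)

def sentOn (M : MessageSet) (i j : ℕ) (τ : Trace) : List ℕ :=
  τ.filterMap (fun α => match α with
    | .send a => if M.src a = i ∧ M.dst a = j then some a else none
    | .recv _ => none)

def recvOn (M : MessageSet) (i j : ℕ) (τ : Trace) : List ℕ :=
  τ.filterMap (fun α => match α with
    | .recv a => if M.src a = i ∧ M.dst a = j then some a else none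
    | .send _ => none)

/-- A trace is FIFO if on every channel, in every prefix, the receives form a
prefix of the sends. -/
def Fifo (M : MessageSet) (τ : Trace) : Prop :=
  ∀ τ', τ' <+: τ → ∀ i j, recvOn M i j τ' <+: sentOn M i j τ'

/-- `k`-bounded FIFO trace: the buffer of each channel never exceeds `k`. -/
def BoundedFifo (M : MessageSet) (k : ℕ) (τ : Trace) : Prop :=
  Fifo M τ ∧ ∀ τ', τ' <+: τ → ∀ i j,
    (sentOn M i j τ').length ≤ (recvOn M i j τ').length + k

/-- `!?a₁ ⬝ !?a₂ ⋯ !?aₙ` -/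
def syncOf (l : List ℕ) : Trace := l.flatMap (fun a => [Act.send a, Act.recv a])

def Synchronous (τ : Trace) : Prop := ∃ l : List ℕ, τ = syncOf l

def CausalEquiv (M : MessageSet) (τ₁ τ₂ : Trace) : Prop :=
  Fifo M τ₁ ∧ Fifo M τ₂ ∧ ∀ i, projPeer M i τ₁ = projPeer M i τ₂

/-- A system of communicating machines: for each peer `i`, an initial state and
a transition relation (all states are accepting). -/
structure System where
  init : ℕ → ℕ
  delta : ℕ → ℕ → Act → ℕ → Prop

/-- Well-formedness: peer `i` performs only actions of peer `i`, on messages of `M`. -/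
def System.WF (S : System) (M : MessageSet) : Prop :=
  ∀ i q α q', S.delta i q α q' → peerOf M α = i ∧ α.msg ∈ M.msgs

/-- The machines are finite-state. -/
def System.FiniteDelta (S : System) : Prop :=
  Set.Finite {x : ℕ × ℕ × Act × ℕ | S.delta x.1 x.2.1 x.2.2.1 x.2.2.2}

/-- A configuration: local states, and one FIFO buffer per channel `(i,j)`. -/
abbrev Config := (ℕ → ℕ) × (ℕ → ℕ → List ℕ)

def Stable (c : Config) : Prop := ∀ i j, c.2 i j = []

def Step (M : MessageSet) (S : System) (c : Config) : Act → Config → Prop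
  | .send a, c' =>
      S.delta (M.src a) (c.1 (M.src a)) (.send a) (c'.1 (M.src a)) ∧
      (∀ k, k ≠ M.src a → c'.1 k = c.1 k) ∧
      c'.2 (M.src a) (M.dst a) = c.2 (M.src a) (M.dst a) ++ [a] ∧
      (∀ k l, ¬(k = M.src a ∧ l = M.dst a) → c'.2 k l = c.2 k l)
  | .recv a, c' =>
      S.delta (M.dst a) (c.1 (M.dst a)) (.recv a) (c'.1 (M.dst a)) ∧
      (∀ k, k ≠ M.dst a → c'.1 k = c.1 k) ∧
      c.2 (M.src a) (M.dst a) = a :: c'.2 (M.src a) (M.dst a) ∧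
      (∀ k l, ¬(k = M.src a ∧ l = M.dst a) → c'.2 k l = c.2 k l)

inductive Exec (M : MessageSet) (S : System) : Config → Trace → Config → Prop
  | refl (c : Config) : Exec M S c [] c
  | step {c c' c'' : Config} {α : Act} {τ : Trace} :
      Step M S c α c' → Exec M S c' τ c'' → Exec M S c (α :: τ) c''

def initConfig (S : System) : Config := (S.init, fun _ _ => [])

def TraceOf (M : MessageSet) (S : System) (τ : Trace) : Prop :=
  ∃ c, Exec M S (initConfig S) τ c

/-- `Trk M S 0` = synchronous traces; `Trk M S k` (`k ≥ 1`) = `k`-bounded traces. -/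
def Trk (M : MessageSet) (S : System) : ℕ → Trace → Prop
  | 0, τ => TraceOf M S τ ∧ Synchronous τ
  | (k+1), τ => TraceOf M S τ ∧ BoundedFifo M (k+1) τ

def Trω (M : MessageSet) (S : System) (τ : Trace) : Prop := ∃ k, Trk M S k τ

/-- Two traces are `S`-equivalent if they lead from the initial configuration to
a common configuration. -/
def SEquiv (M : MessageSet) (S : System) (τ₁ τ₂ : Trace) : Prop :=
  ∃ c, Exec M S (initConfig S) τ₁ c ∧ Exec M S (initConfig S) τ₂ c

/-- Send-trace language. -/
def STw (M : MessageSet) (S : System) (T : Trace → Prop) : Set (List ℕ) :=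
  {w | ∃ τ, T τ ∧ sendProj τ = w}

/-- Send traces enriched with the reached stable configurations. -/
def STc (M : MessageSet) (S : System) (T : Trace → Prop) :
    Set (List ℕ ⊕ List ℕ × Config) :=
  {x | (∃ τ, T τ ∧ x = Sum.inl (sendProj τ)) ∨
       (∃ τ c, T τ ∧ Exec M S (initConfig S) τ c ∧ Stable c ∧
          x = Sum.inr (sendProj τ, c))}

def kSync (M : MessageSet) (S : System) (k : ℕ) : Prop :=
  STc M S (Trk M S 0) = STc M S (Trk M S k)

def Synchronizable (M : MessageSet) (S : System) : Prop :=
  STc M S (Trk M S 0) = STc M S (Trω M S)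

def LangSync (M : MessageSet) (S : System) : Prop :=
  STw M S (Trk M S 0) = STw M S (Trω M S)

inductive Shuffle : List Act → List Act → List Act → Prop
  | nil : Shuffle [] [] []
  | left {u v w : List Act} (a : Act) : Shuffle u v w → Shuffle (a :: u) v (a :: w)
  | right {u v w : List Act} (b : Act) : Shuffle u v w → Shuffle u (b :: v) (b :: w)

inductive NShuffle : List ℕ → List ℕ → List ℕ → Prop
  | nil : NShuffle [] [] []
  | left {u v w : List ℕ} (a : ℕ) : NShuffle u v w → NShuffle (a :: u) v (a :: w)
  | right {u v w : List ℕ} (b : ℕ) : NShuffle u v w → NShuffle u (b :: v) (b :: w)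

inductive PPath (S : System) (i : ℕ) : ℕ → Trace → Prop
  | nil (q : ℕ) : PPath S i q []
  | cons {q q' : ℕ} {α : Act} {w : Trace} :
      S.delta i q α q' → PPath S i q' w → PPath S i q (α :: w)

/-- The language of peer `i` (all states accepting). -/
def Lang (S : System) (i : ℕ) : Set Trace := {w | PPath S i (S.init i) w}

def prefCl (L : Set Trace) : Set Trace := {w | ∃ v ∈ L, w <+: v}

def OrientedRing (M : MessageSet) : Prop :=
  1 ≤ M.p ∧ ∀ i j, (∃ a ∈ M.msgs, M.src a = i ∧ M.dst a = j) ↔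
    (i < M.p ∧ j = (i + 1) % M.p)

set_option linter.unusedVariables false
set_option maxHeartbeats 1000000

section SyncAux

variable {M : MessageSet} {S : System}

/-! ### Basic list computations -/

theorem syncOf_append (u v : List ℕ) : syncOf (u ++ v) = syncOf u ++ syncOf v := by
  simp [syncOf]

theorem syncOf_cons (a : ℕ) (u : List ℕ) :
    syncOf (a :: u) = Act.send a :: Act.recv a :: syncOf u := rfl

theorem sendProj_append (a b : Trace) : sendProj (a ++ b) = sendProj a ++ sendProj b := by
  simp [sendProj]

theorem sendProj_syncOf (u : List ℕ) : sendProj (syncOf u) = u := by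
  induction u with
  | nil => rfl
  | cons a u ih => simpa [syncOf_cons, sendProj] using ih

theorem projPeer_append (i : ℕ) (a b : Trace) :
    projPeer M i (a ++ b) = projPeer M i a ++ projPeer M i b := by
  simp [projPeer]

def pjx (M : MessageSet) (i a : ℕ) : Trace :=
  (if M.src a = i then [Act.send a] else []) ++ (if M.dst a = i then [Act.recv a] else [])

theorem projPeer_nil (i : ℕ) : projPeer M i [] = [] := rfl

theorem projPeer_send (i x : ℕ) :
    projPeer M i [Act.send x] = if M.src x = i then [Act.send x] else [] := by
  by_cases h : M.src x = i <;> simp [projPeer, peerOf, h]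

theorem projPeer_recv (i x : ℕ) :
    projPeer M i [Act.recv x] = if M.dst x = i then [Act.recv x] else [] := by
  by_cases h : M.dst x = i <;> simp [projPeer, peerOf, h]

theorem projPeer_cons (i : ℕ) (α : Act) (τ : Trace) :
    projPeer M i (α :: τ) = projPeer M i [α] ++ projPeer M i τ := by
  rw [← projPeer_append]; rfl

theorem projPeer_syncOf_cons (i a : ℕ) (u : List ℕ) :
    projPeer M i (syncOf (a :: u)) = pjx M i a ++ projPeer M i (syncOf u) := by
  rw [syncOf_cons, projPeer_cons, projPeer_cons (τ := syncOf u), pjx,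
    projPeer_send, projPeer_recv, List.append_assoc]

theorem sentOn_append (i j : ℕ) (a b : Trace) :
    sentOn M i j (a ++ b) = sentOn M i j a ++ sentOn M i j b := by
  simp [sentOn]

theorem recvOn_append (i j : ℕ) (a b : Trace) :
    recvOn M i j (a ++ b) = recvOn M i j a ++ recvOn M i j b := by
  simp [recvOn]

theorem sentOn_nil (i j : ℕ) : sentOn M i j [] = [] := rfl
theorem recvOn_nil (i j : ℕ) : recvOn M i j [] = [] := rfl

theorem sentOn_send (i j x : ℕ) :
    sentOn M i j [Act.send x] = if M.src x = i ∧ M.dst x = j then [x] else [] := by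
  by_cases h : M.src x = i ∧ M.dst x = j <;> simp [sentOn, h]

theorem sentOn_recv (i j x : ℕ) : sentOn M i j [Act.recv x] = [] := by simp [sentOn]

theorem recvOn_recv (i j x : ℕ) :
    recvOn M i j [Act.recv x] = if M.src x = i ∧ M.dst x = j then [x] else [] := by
  by_cases h : M.src x = i ∧ M.dst x = j <;> simp [recvOn, h]

theorem recvOn_send (i j x : ℕ) : recvOn M i j [Act.send x] = [] := by simp [recvOn]

theorem sentOn_cons (i j : ℕ) (α : Act) (τ : Trace) :
    sentOn M i j (α :: τ) = sentOn M i j [α] ++ sentOn M i j τ := by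
  rw [← sentOn_append]; rfl

theorem recvOn_cons (i j : ℕ) (α : Act) (τ : Trace) :
    recvOn M i j (α :: τ) = recvOn M i j [α] ++ recvOn M i j τ := by
  rw [← recvOn_append]; rfl


theorem sentOn_cons_send (i j x : ℕ) (τ : Trace) :
    sentOn M i j (Act.send x :: τ) =
      if M.src x = i ∧ M.dst x = j then x :: sentOn M i j τ else sentOn M i j τ := by
  by_cases h : M.src x = i ∧ M.dst x = j <;> simp [sentOn, h]

theorem sentOn_cons_recv (i j x : ℕ) (τ : Trace) :
    sentOn M i j (Act.recv x :: τ) = sentOn M i j τ := by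
  simp [sentOn]

theorem recvOn_cons_recv (i j x : ℕ) (τ : Trace) :
    recvOn M i j (Act.recv x :: τ) =
      if M.src x = i ∧ M.dst x = j then x :: recvOn M i j τ else recvOn M i j τ := by
  by_cases h : M.src x = i ∧ M.dst x = j <;> simp [recvOn, h]

theorem recvOn_cons_send (i j x : ℕ) (τ : Trace) :
    recvOn M i j (Act.send x :: τ) = recvOn M i j τ := by
  simp [recvOn]

/-! ### Balanced traces -/

def Bal (M : MessageSet) (τ : Trace) : Prop := ∀ i j, recvOn M i j τ = sentOn M i j τ

theorem bal_nil : Bal M [] := fun _ _ => rfl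

theorem bal_append {a b : Trace} (ha : Bal M a) (hb : Bal M b) : Bal M (a ++ b) := by
  intro i j; rw [recvOn_append, sentOn_append, ha i j, hb i j]

theorem bal_pair (a : ℕ) : Bal M [Act.send a, Act.recv a] := by
  intro i j
  rw [recvOn_cons, sentOn_cons, recvOn_send, sentOn_send,
    show (recvOn M i j [Act.recv a] = if M.src a = i ∧ M.dst a = j then [a] else []) from recvOn_recv i j a,
    show (sentOn M i j [Act.recv a] = []) from sentOn_recv i j a]
  simp

theorem bal_syncOf (u : List ℕ) : Bal M (syncOf u) := by
  induction u with
  | nil => exact bal_nil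
  | cons a u ih => rw [syncOf_cons]
                   exact bal_append (b := syncOf u) (bal_pair a) ih

/-! ### Prefix helpers -/

theorem prefix_cons_cases {π : Trace} {x : Act} {l : Trace} (h : π <+: x :: l) :
    π = [] ∨ ∃ π', π = x :: π' ∧ π' <+: l := by
  cases π with
  | nil => exact Or.inl rfl
  | cons y π' =>
    obtain ⟨t, ht⟩ := h
    injection ht with h1 h2
    exact Or.inr ⟨π', by rw [h1], ⟨t, h2⟩⟩

theorem prefix_append_cases {π A B : Trace} (h : π <+: A ++ B) :
    π <+: A ∨ ∃ ρ, ρ <+: B ∧ π = A ++ ρ := by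
  induction A generalizing π with
  | nil => exact Or.inr ⟨π, by simpa using h, rfl⟩
  | cons x A ih =>
    rcases prefix_cons_cases h with rfl | ⟨π', rfl, hp⟩
    · exact Or.inl (List.nil_prefix)
    · rcases ih hp with h1 | ⟨ρ, h1, rfl⟩
      · exact Or.inl (List.cons_prefix_cons.2 ⟨rfl, h1⟩)
      · exact Or.inr ⟨ρ, h1, rfl⟩

theorem prefix_append_left {α : Type _} {l₁ l₂ s : List α}  (h : l₁ <+: l₂) : s ++ l₁ <+: s ++ l₂ := by
  obtain ⟨t, rfl⟩ := h
  exact ⟨t, by rw [List.append_assoc]⟩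

/-! ### FIFO composition -/

theorem fifo_nil : Fifo M [] := by
  intro π hπ i j
  rw [List.prefix_nil.1 hπ]
  exact List.nil_prefix

theorem fifo_prefix {τ π : Trace} (h : Fifo M τ) (hp : π <+: τ) : Fifo M π :=
  fun ρ hρ => h ρ (hρ.trans hp)

theorem fifo_append {A B : Trace} (ha : Fifo M A) (hbal : Bal M A) (hb : Fifo M B) :
    Fifo M (A ++ B) := by
  intro π hπ i j
  rcases prefix_append_cases hπ with h | ⟨ρ, hρ, rfl⟩
  · exact ha π h i j
  · rw [recvOn_append, sentOn_append, hbal i j]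
    exact prefix_append_left (hb ρ hρ i j)

def Bdd (M : MessageSet) (τ : Trace) : Prop :=
  ∀ π, π <+: τ → ∀ i j, (sentOn M i j π).length ≤ (recvOn M i j π).length + 1

theorem bdd_append {A B : Trace} (ha : Bdd M A) (hbal : Bal M A) (hb : Bdd M B) :
    Bdd M (A ++ B) := by
  intro π hπ i j
  rcases prefix_append_cases hπ with h | ⟨ρ, hρ, rfl⟩
  · exact ha π h i j
  · rw [recvOn_append, sentOn_append, List.length_append, List.length_append, hbal i j]
    have := hb ρ hρ i j
    omega

theorem fifo_pair (a : ℕ) : Fifo M [Act.send a, Act.recv a] := by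
  intro π hπ i j
  rcases prefix_cons_cases hπ with rfl | ⟨π', rfl, hp⟩
  · exact List.nil_prefix
  · rcases prefix_cons_cases hp with rfl | ⟨π'', rfl, hp'⟩
    · rw [recvOn_cons, recvOn_send, recvOn_nil]
      exact List.nil_prefix
    · rw [List.prefix_nil.1 hp']
      rw [recvOn_cons, sentOn_cons, recvOn_send, sentOn_send, recvOn_cons, sentOn_cons,
        recvOn_recv, sentOn_recv, recvOn_nil, sentOn_nil]
      simp

theorem bdd_pair (a : ℕ) : Bdd M [Act.send a, Act.recv a] := by
  intro π hπ i j
  rcases prefix_cons_cases hπ with rfl | ⟨π', rfl, hp⟩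
  · simp [sentOn_nil]
  · rcases prefix_cons_cases hp with rfl | ⟨π'', rfl, hp'⟩
    · rw [sentOn_cons, sentOn_send, sentOn_nil]
      by_cases h : M.src a = i ∧ M.dst a = j <;> simp [h]
    · rw [List.prefix_nil.1 hp']
      rw [sentOn_cons, sentOn_send, recvOn_cons, recvOn_send, sentOn_cons, sentOn_recv,
        recvOn_cons, recvOn_recv, recvOn_nil, sentOn_nil]
      by_cases h : M.src a = i ∧ M.dst a = j <;> simp [h]

theorem fifo_syncOf (u : List ℕ) : Fifo M (syncOf u) := by
  induction u with
  | nil => exact fifo_nil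
  | cons a u ih => rw [syncOf_cons]
                   exact fifo_append (B := syncOf u) (fifo_pair a) (bal_pair a) ih

theorem bdd_syncOf (u : List ℕ) : Bdd M (syncOf u) := by
  induction u with
  | nil => intro π hπ i j; rw [List.prefix_nil.1 hπ]; simp [sentOn_nil, recvOn_nil]
  | cons a u ih => rw [syncOf_cons]
                   exact bdd_append (B := syncOf u) (bdd_pair a) (bal_pair a) ih

theorem boundedFifo_of {τ : Trace} (hf : Fifo M τ) (hb : Bdd M τ) : BoundedFifo M 1 τ :=
  ⟨hf, hb⟩

end SyncAux
section ExecChar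

variable {M : MessageSet} {S : System}

inductive LRun (S : System) (i : ℕ) : ℕ → Trace → ℕ → Prop
  | nil (q : ℕ) : LRun S i q [] q
  | cons {q q' q'' : ℕ} {α : Act} {w : Trace} :
      S.delta i q α q' → LRun S i q' w q'' → LRun S i q (α :: w) q''

theorem LRun.nil_inv {i q q' : ℕ} (h : LRun S i q [] q') : q = q' := by
  cases h; rfl

theorem LRun.single_inv {i q q' : ℕ} {α : Act} (h : LRun S i q [α] q') :
    S.delta i q α q' := by
  cases h with
  | cons h1 h2 => cases h2; exact h1

theorem LRun.append_split {i q q'' : ℕ} {w₁ w₂ : Trace} (h : LRun S i q (w₁ ++ w₂) q'') :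
    ∃ q', LRun S i q w₁ q' ∧ LRun S i q' w₂ q'' := by
  induction w₁ generalizing q with
  | nil => exact ⟨q, LRun.nil q, h⟩
  | cons α w ih =>
    cases h with
    | cons h1 h2 =>
      obtain ⟨q', hq1, hq2⟩ := ih h2
      exact ⟨q', LRun.cons h1 hq1, hq2⟩

theorem LRun.append {i q q' q'' : ℕ} {w₁ w₂ : Trace}
    (h1 : LRun S i q w₁ q') (h2 : LRun S i q' w₂ q'') :
    LRun S i q (w₁ ++ w₂) q'' := by
  induction w₁ generalizing q with
  | nil => cases h1; exact h2
  | cons α w ih =>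
    cases h1 with
    | cons hd tl => exact LRun.cons hd (ih tl)

theorem LRun.of_prefix {i q q'' : ℕ} {w₁ w₂ : Trace} (hp : w₁ <+: w₂)
    (h : LRun S i q w₂ q'') : ∃ q', LRun S i q w₁ q' := by
  obtain ⟨t, rfl⟩ := hp
  obtain ⟨q', h1, _⟩ := h.append_split
  exact ⟨q', h1⟩

/-! ### Buffers determined by the trace -/

def bufOf (M : MessageSet) (τ : Trace) : ℕ → ℕ → List ℕ :=
  fun i j => (sentOn M i j τ).drop (recvOn M i j τ).length

theorem bufOf_nil : bufOf M [] = fun _ _ => [] := rfl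

theorem bufOf_bal {τ : Trace} (h : Bal M τ) : bufOf M τ = fun _ _ => [] := by
  funext i j
  simp [bufOf, h i j, List.drop_length]

/-! ### Exec splitting -/

theorem Exec.append_split {c c'' : Config} {A B : Trace} (h : Exec M S c (A ++ B) c'') :
    ∃ c', Exec M S c A c' ∧ Exec M S c' B c'' := by
  induction A generalizing c with
  | nil => exact ⟨c, Exec.refl c, h⟩
  | cons α A ih =>
    cases h with
    | step h1 h2 =>
      obtain ⟨c', hc1, hc2⟩ := ih h2
      exact ⟨c', Exec.step h1 hc1, hc2⟩

theorem Exec.append' {c c' c'' : Config} {A B : Trace}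
    (h1 : Exec M S c A c') (h2 : Exec M S c' B c'') : Exec M S c (A ++ B) c'' := by
  induction A generalizing c with
  | nil => cases h1; exact h2
  | cons α A ih =>
    cases h1 with
    | step hs he => exact Exec.step hs (ih he)

theorem Exec.single {c c' : Config} {α : Act} (h : Exec M S c [α] c') :
    Step M S c α c' := by
  cases h with
  | step h1 h2 => cases h2; exact h1

/-! ### Snoc computations -/

theorem projPeer_snoc (i : ℕ) (τ : Trace) (α : Act) :
    projPeer M i (τ ++ [α]) = projPeer M i τ ++ if peerOf M α = i then [α] else [] := by
  rw [projPeer_append]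
  congr 1
  by_cases h : peerOf M α = i <;> simp [projPeer, h]

theorem bufOf_snoc_send (τ : Trace) (x : ℕ)
    (hf : recvOn M (M.src x) (M.dst x) τ <+: sentOn M (M.src x) (M.dst x) τ) (i j : ℕ) :
    bufOf M (τ ++ [Act.send x]) i j =
      if M.src x = i ∧ M.dst x = j then bufOf M τ i j ++ [x] else bufOf M τ i j := by
  by_cases h : M.src x = i ∧ M.dst x = j
  · obtain ⟨hi, hj⟩ := h
    subst hi; subst hj
    rw [if_pos ⟨rfl, rfl⟩]
    unfold bufOf
    rw [sentOn_append, recvOn_append, sentOn_send, recvOn_send, if_pos ⟨rfl, rfl⟩,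
      List.append_nil, List.drop_append_of_le_length hf.length_le]
  · rw [if_neg h]
    unfold bufOf
    rw [sentOn_append, recvOn_append, sentOn_send, recvOn_send, if_neg h,
      List.append_nil, List.append_nil]

theorem bufOf_snoc_recv_ne (τ : Trace) (x : ℕ) (i j : ℕ) (h : ¬(M.src x = i ∧ M.dst x = j)) :
    bufOf M (τ ++ [Act.recv x]) i j = bufOf M τ i j := by
  unfold bufOf
  rw [sentOn_append, recvOn_append, sentOn_recv, recvOn_recv, if_neg h,
    List.append_nil, List.append_nil]

theorem drop_len_append {β : Type _} (r l : List β) : List.drop r.length (r ++ l) = l := by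
  induction r with
  | nil => rfl
  | cons a r ih => simpa using ih

theorem bufOf_snoc_recv (τ : Trace) (x : ℕ)
    (hf : recvOn M (M.src x) (M.dst x) (τ ++ [Act.recv x]) <+:
      sentOn M (M.src x) (M.dst x) (τ ++ [Act.recv x])) :
    bufOf M τ (M.src x) (M.dst x) = x :: bufOf M (τ ++ [Act.recv x]) (M.src x) (M.dst x) := by
  have h1 : recvOn M (M.src x) (M.dst x) (τ ++ [Act.recv x]) =
      recvOn M (M.src x) (M.dst x) τ ++ [x] := by
    rw [recvOn_append, recvOn_recv, if_pos ⟨rfl, rfl⟩]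
  have h2 : sentOn M (M.src x) (M.dst x) (τ ++ [Act.recv x]) =
      sentOn M (M.src x) (M.dst x) τ := by
    rw [sentOn_append, sentOn_recv, List.append_nil]
  rw [h1, h2] at hf
  obtain ⟨t, ht⟩ := hf
  have hs : sentOn M (M.src x) (M.dst x) τ = recvOn M (M.src x) (M.dst x) τ ++ (x :: t) := by
    rw [← ht]; simp
  unfold bufOf
  rw [h1, h2, hs, List.length_append, drop_len_append]
  have : recvOn M (M.src x) (M.dst x) τ ++ (x :: t) =
      (recvOn M (M.src x) (M.dst x) τ ++ [x]) ++ t := by simp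
  rw [this]
  have h3 : (recvOn M (M.src x) (M.dst x) τ).length + [x].length =
      (recvOn M (M.src x) (M.dst x) τ ++ [x]).length := by simp
  rw [h3, drop_len_append]

/-! ### Characterization of executions -/

theorem exec_char_mpr {τ : Trace} {q : ℕ → ℕ} (hf : Fifo M τ)
    (hr : ∀ i, LRun S i (S.init i) (projPeer M i τ) (q i)) :
    Exec M S (initConfig S) τ (q, bufOf M τ) := by
  induction τ using List.reverseRecOn generalizing q with
  | nil =>
    have hq : q = S.init := funext fun i => by
      have := (hr i); rw [projPeer_nil] at this; exact this.nil_inv.symm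
    rw [hq, bufOf_nil]
    exact Exec.refl _
  | append_singleton τ α ih =>
    have hfτ : Fifo M τ := fifo_prefix hf ⟨[α], rfl⟩
    have hpr : projPeer M (peerOf M α) (τ ++ [α]) = projPeer M (peerOf M α) τ ++ [α] := by
      rw [projPeer_snoc, if_pos rfl]
    obtain ⟨qm, hq1, hq2⟩ := LRun.append_split (by rw [← hpr]; exact hr (peerOf M α))
    have hδ : S.delta (peerOf M α) qm α (q (peerOf M α)) := hq2.single_inv
    have hrm : ∀ i, LRun S i (S.init i) (projPeer M i τ)
        (Function.update q (peerOf M α) qm i) := by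
      intro i
      by_cases hip : i = peerOf M α
      · subst hip; simpa [Function.update_self] using hq1
      · have hpi : projPeer M i (τ ++ [α]) = projPeer M i τ := by
          rw [projPeer_snoc, if_neg (fun hh => hip hh.symm), List.append_nil]
        rw [← hpi, Function.update_of_ne hip]
        exact hr i
    have hmid := ih hfτ hrm
    refine Exec.append' hmid (Exec.step ?_ (Exec.refl _))
    have hfull : recvOn M (M.src α.msg) (M.dst α.msg) τ <+:
        sentOn M (M.src α.msg) (M.dst α.msg) τ := hfτ τ (List.prefix_refl τ) _ _
    cases α with
    | send a =>
      refine ⟨?_, ?_, ?_, ?_⟩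
      · show S.delta (M.src a) (Function.update q (peerOf M (Act.send a)) qm (M.src a)) _ _
        have : peerOf M (Act.send a) = M.src a := rfl
        rw [this, Function.update_self]
        exact hδ
      · intro k hk
        show q k = Function.update q (peerOf M (Act.send a)) qm k
        rw [Function.update_of_ne (by exact fun h => hk (by rw [h]; rfl))]
      · show bufOf M (τ ++ [Act.send a]) (M.src a) (M.dst a) = _
        rw [bufOf_snoc_send τ a hfull, if_pos ⟨rfl, rfl⟩]
      · intro k l hkl
        show bufOf M (τ ++ [Act.send a]) k l = bufOf M τ k l
        rw [bufOf_snoc_send τ a hfull, if_neg (fun hh => hkl ⟨hh.1.symm, hh.2.symm⟩)]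
    | recv a =>
      refine ⟨?_, ?_, ?_, ?_⟩
      · show S.delta (M.dst a) (Function.update q (peerOf M (Act.recv a)) qm (M.dst a)) _ _
        have : peerOf M (Act.recv a) = M.dst a := rfl
        rw [this, Function.update_self]
        exact hδ
      · intro k hk
        show q k = Function.update q (peerOf M (Act.recv a)) qm k
        rw [Function.update_of_ne (by exact fun h => hk (by rw [h]; rfl))]
      · show bufOf M τ (M.src a) (M.dst a) = a :: bufOf M (τ ++ [Act.recv a]) (M.src a) (M.dst a)
        exact bufOf_snoc_recv τ a (hf (τ ++ [Act.recv a]) (List.prefix_refl _) _ _)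
      · intro k l hkl
        show bufOf M (τ ++ [Act.recv a]) k l = bufOf M τ k l
        exact bufOf_snoc_recv_ne τ a k l (fun hh => hkl ⟨hh.1.symm, hh.2.symm⟩)

theorem exec_char_mp {τ : Trace} {c : Config} (h : Exec M S (initConfig S) τ c) :
    Fifo M τ ∧ (∀ i, LRun S i (S.init i) (projPeer M i τ) (c.1 i)) ∧ c.2 = bufOf M τ := by
  induction τ using List.reverseRecOn generalizing c with
  | nil =>
    cases h
    exact ⟨fifo_nil, fun i => by rw [projPeer_nil]; exact LRun.nil _, rfl⟩
  | append_singleton τ α ih =>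
    obtain ⟨cm, hm, hstep⟩ := h.append_split
    have hs := hstep.single
    obtain ⟨hfτ, hrm, hbm⟩ := ih hm
    cases α with
    | send a =>
      obtain ⟨hδ, hst, hbuf, hbo⟩ := hs
      have hfull : recvOn M (M.src a) (M.dst a) τ <+: sentOn M (M.src a) (M.dst a) τ :=
        hfτ τ (List.prefix_refl τ) _ _
      have hff : Fifo M (τ ++ [Act.send a]) := by
        intro π hπ i j
        rcases prefix_append_cases hπ with h1 | ⟨ρ, hρ, rfl⟩
        · exact hfτ π h1 i j
        · rcases prefix_cons_cases hρ with rfl | ⟨ρ', rfl, hρ'⟩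
          · simpa using hfτ τ (List.prefix_refl τ) i j
          · rw [List.prefix_nil.1 hρ']
            rw [recvOn_append, sentOn_append, recvOn_send, List.append_nil]
            exact (hfτ τ (List.prefix_refl τ) i j).trans (List.prefix_append _ _)
      refine ⟨hff, ?_, ?_⟩
      · intro i
        by_cases hip : i = M.src a
        · subst hip
          have hpr : projPeer M (M.src a) (τ ++ [Act.send a]) =
              projPeer M (M.src a) τ ++ [Act.send a] := by
            rw [projPeer_snoc, if_pos (show peerOf M (Act.send a) = M.src a from rfl)]
          rw [hpr]
          exact LRun.append (hrm (M.src a)) (LRun.cons hδ (LRun.nil _))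
        · have hpr : projPeer M i (τ ++ [Act.send a]) = projPeer M i τ := by
            rw [projPeer_snoc, if_neg (fun hh => hip hh.symm), List.append_nil]
          rw [hpr, hst i hip]
          exact hrm i
      · funext i j
        by_cases hch : M.src a = i ∧ M.dst a = j
        · obtain ⟨hi, hj⟩ := hch
          subst hi; subst hj
          rw [bufOf_snoc_send τ a hfull, if_pos ⟨rfl, rfl⟩, ← hbm]
          exact hbuf
        · rw [bufOf_snoc_send τ a hfull, if_neg hch, ← hbm]
          exact hbo i j (fun hh => hch ⟨hh.1.symm, hh.2.symm⟩)
    | recv a =>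
      obtain ⟨hδ, hst, hbuf, hbo⟩ := hs
      have hfτfull : recvOn M (M.src a) (M.dst a) τ <+: sentOn M (M.src a) (M.dst a) τ :=
        hfτ τ (List.prefix_refl τ) _ _
      -- key: buffer head is a
      have hkey : recvOn M (M.src a) (M.dst a) τ ++ [a] <+: sentOn M (M.src a) (M.dst a) τ := by
        obtain ⟨t, ht⟩ := hfτfull
        have hbτ : bufOf M τ (M.src a) (M.dst a) = a :: c.2 (M.src a) (M.dst a) := by
          rw [← hbm]; exact hbuf
        unfold bufOf at hbτ
        rw [← ht, List.drop_append_of_le_length (le_refl _), List.drop_length] at hbτ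
        have hbτ' : t = a :: c.2 (M.src a) (M.dst a) := by simpa using hbτ
        rw [← ht, hbτ']
        exact prefix_append_left ⟨_, rfl⟩
      have hff : Fifo M (τ ++ [Act.recv a]) := by
        intro π hπ i j
        rcases prefix_append_cases hπ with h1 | ⟨ρ, hρ, rfl⟩
        · exact hfτ π h1 i j
        · rcases prefix_cons_cases hρ with rfl | ⟨ρ', rfl, hρ'⟩
          · simpa using hfτ τ (List.prefix_refl τ) i j
          · rw [List.prefix_nil.1 hρ']
            rw [recvOn_append, sentOn_append, sentOn_recv, recvOn_recv, List.append_nil]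
            by_cases hch : M.src a = i ∧ M.dst a = j
            · rw [if_pos hch]
              obtain ⟨hi, hj⟩ := hch; subst hi; subst hj
              exact hkey
            · rw [if_neg hch, List.append_nil]
              exact hfτ τ (List.prefix_refl τ) i j
      refine ⟨hff, ?_, ?_⟩
      · intro i
        by_cases hip : i = M.dst a
        · subst hip
          have hpr : projPeer M (M.dst a) (τ ++ [Act.recv a]) =
              projPeer M (M.dst a) τ ++ [Act.recv a] := by
            rw [projPeer_snoc, if_pos (show peerOf M (Act.recv a) = M.dst a from rfl)]
          rw [hpr]
          exact LRun.append (hrm (M.dst a)) (LRun.cons hδ (LRun.nil _))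
        · have hpr : projPeer M i (τ ++ [Act.recv a]) = projPeer M i τ := by
            rw [projPeer_snoc, if_neg (fun hh => hip hh.symm), List.append_nil]
          rw [hpr, hst i hip]
          exact hrm i
      · funext i j
        by_cases hch : M.src a = i ∧ M.dst a = j
        · obtain ⟨hi, hj⟩ := hch
          subst hi; subst hj
          have h1 := bufOf_snoc_recv τ a (hff (τ ++ [Act.recv a]) (List.prefix_refl _) _ _)
          have h2 : bufOf M τ (M.src a) (M.dst a) = a :: c.2 (M.src a) (M.dst a) := by
            rw [← hbm]; exact hbuf
          rw [h1] at h2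
          exact (List.cons.injEq _ _ _ _ ▸ h2).2.symm ▸ rfl
        · rw [bufOf_snoc_recv_ne τ a i j hch, ← hbm]
          exact hbo i j (fun hh => hch ⟨hh.1.symm, hh.2.symm⟩)

end ExecChar
section Oracle

variable {M : MessageSet} {S : System}

theorem trk_zero_iff (τ : Trace) : Trk M S 0 τ ↔ TraceOf M S τ ∧ Synchronous τ := Iff.rfl
theorem trk_one_iff (τ : Trace) : Trk M S 1 τ ↔ TraceOf M S τ ∧ BoundedFifo M 1 τ := Iff.rfl

theorem traceOf_syncOf_of_runs {w : List ℕ}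
    (h : ∀ i, ∃ s, LRun S i (S.init i) (projPeer M i (syncOf w)) s) :
    TraceOf M S (syncOf w) := by
  choose q hq using h
  exact ⟨(q, bufOf M (syncOf w)), exec_char_mpr (fifo_syncOf w) hq⟩

theorem runs_of_traceOf {τ : Trace} (h : TraceOf M S τ) :
    ∀ i, ∃ s, LRun S i (S.init i) (projPeer M i τ) s := by
  obtain ⟨c, hc⟩ := h
  intro i
  exact ⟨c.1 i, (exec_char_mp hc).2.1 i⟩

theorem traceOf_syncOf_prefix {A B : List ℕ} (h : TraceOf M S (syncOf (A ++ B))) :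
    TraceOf M S (syncOf A) := by
  obtain ⟨c, hc⟩ := h
  rw [syncOf_append] at hc
  obtain ⟨c', hc', _⟩ := hc.append_split
  exact ⟨c', hc'⟩

theorem oracle_inl (hsync : kSync M S 1) {e : Trace}
    (hT : TraceOf M S e) (hb : BoundedFifo M 1 e) :
    TraceOf M S (syncOf (sendProj e)) := by
  have hmem : Sum.inl (sendProj e) ∈ STc M S (Trk M S 1) :=
    Or.inl ⟨e, (trk_one_iff e).2 ⟨hT, hb⟩, rfl⟩
  rw [← hsync] at hmem
  rcases hmem with ⟨τ', hτ', heq⟩ | ⟨τ', c', hτ', _, _, heq⟩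
  · obtain ⟨hT', hsyn'⟩ := (trk_zero_iff τ').1 hτ'
    obtain ⟨l', rfl⟩ := hsyn'
    have hl : (sendProj e : List ℕ) = l' := by
      have := Sum.inl.inj heq
      rw [sendProj_syncOf] at this
      exact this
    rw [hl]
    exact hT'
  · simp at heq

theorem oracle_inr (hsync : kSync M S 1) {e : Trace} {c : Config}
    (he : Exec M S (initConfig S) e c) (hb : BoundedFifo M 1 e) (hst : Stable c) :
    Exec M S (initConfig S) (syncOf (sendProj e)) c := by
  have hmem : Sum.inr ((sendProj e, c) : List ℕ × Config) ∈ STc M S (Trk M S 1) :=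
    Or.inr ⟨e, c, (trk_one_iff e).2 ⟨⟨c, he⟩, hb⟩, he, hst, rfl⟩
  rw [← hsync] at hmem
  rcases hmem with ⟨τ', hτ', heq⟩ | ⟨τ', c', hτ', hex', hst', heq⟩
  · simp at heq
  · obtain ⟨hT', hsyn'⟩ := (trk_zero_iff τ').1 hτ'
    obtain ⟨l', rfl⟩ := hsyn'
    have h1 := Sum.inr.inj heq
    have hw : (sendProj e : List ℕ) = l' := by
      have := congrArg Prod.fst h1
      simpa [sendProj_syncOf] using this
    have hc : c = c' := congrArg Prod.snd h1
    rw [hw, hc]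
    exact hex'

end Oracle

section Shapes

variable {M : MessageSet} {S : System}

theorem no_chan_recvOn {τ : Trace} {i j : ℕ}
    (h : ∀ a, Act.recv a ∈ τ → ¬(M.src a = i ∧ M.dst a = j)) : recvOn M i j τ = [] := by
  induction τ with
  | nil => rfl
  | cons α τ ih =>
    rw [recvOn_cons]
    cases α with
    | send b =>
      rw [recvOn_send]
      exact ih (fun a ha => h a (List.mem_cons_of_mem _ ha))
    | recv b =>
      rw [recvOn_recv, if_neg (h b (List.mem_cons_self))]
      exact ih (fun a ha => h a (List.mem_cons_of_mem _ ha))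

theorem no_chan_sentOn {τ : Trace} {i j : ℕ}
    (h : ∀ a, Act.send a ∈ τ → ¬(M.src a = i ∧ M.dst a = j)) : sentOn M i j τ = [] := by
  induction τ with
  | nil => rfl
  | cons α τ ih =>
    rw [sentOn_cons]
    cases α with
    | recv b =>
      rw [sentOn_recv]
      exact ih (fun a ha => h a (List.mem_cons_of_mem _ ha))
    | send b =>
      rw [sentOn_send, if_neg (h b (List.mem_cons_self))]
      exact ih (fun a ha => h a (List.mem_cons_of_mem _ ha))

theorem mem_syncOf {α : Act} {u : List ℕ} (h : α ∈ syncOf u) : α.msg ∈ u := by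
  induction u with
  | nil => simp [syncOf] at h
  | cons b u ih =>
    rw [syncOf_cons] at h
    rcases List.mem_cons.1 h with rfl | h'
    · simp [Act.msg]
    · rcases List.mem_cons.1 h' with rfl | h''
      · simp [Act.msg]
      · exact List.mem_cons_of_mem _ (ih h'')

theorem fifo_send_cons {x : ℕ} {τ : Trace}
    (hno : ∀ α ∈ τ, M.src α.msg ≠ M.src x)
    (hf : Fifo M τ) : Fifo M (Act.send x :: τ) := by
  intro π hπ i j
  rcases prefix_cons_cases hπ with rfl | ⟨π', rfl, hp⟩
  · rw [recvOn_nil]; exact List.nil_prefix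
  · rw [recvOn_cons, sentOn_cons, recvOn_send, sentOn_send]
    by_cases hch : M.src x = i ∧ M.dst x = j
    · rw [if_pos hch]
      have hre : recvOn M i j π' = [] := no_chan_recvOn (fun a ha hc =>
        hno (Act.recv a) (hp.subset ha) (by
          show M.src a = M.src x
          rw [hc.1, hch.1]))
      rw [hre]
      simp
    · rw [if_neg hch]
      simpa using hf π' hp i j

theorem bdd_send_cons {x : ℕ} {τ : Trace}
    (hno : ∀ α ∈ τ, M.src α.msg ≠ M.src x)
    (hb : Bdd M τ) : Bdd M (Act.send x :: τ) := by
  intro π hπ i j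
  rcases prefix_cons_cases hπ with rfl | ⟨π', rfl, hp⟩
  · simp [sentOn_nil]
  · rw [recvOn_cons, sentOn_cons, recvOn_send, sentOn_send]
    by_cases hch : M.src x = i ∧ M.dst x = j
    · rw [if_pos hch]
      have hse : sentOn M i j π' = [] := no_chan_sentOn (fun a ha hc =>
        hno (Act.send a) (hp.subset ha) (by
          show M.src a = M.src x
          rw [hc.1, hch.1]))
      rw [hse]
      simp
    · rw [if_neg hch]
      have := hb π' hp i j
      simpa using this

theorem fifo_single_send (y : ℕ) : Fifo M [Act.send y] := by
  intro π hπ i j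
  rcases prefix_cons_cases hπ with rfl | ⟨π', rfl, hp⟩
  · rw [recvOn_nil]; exact List.nil_prefix
  · rw [List.prefix_nil.1 hp, recvOn_cons, recvOn_send, recvOn_nil]
    exact List.nil_prefix

theorem bdd_single_send (y : ℕ) : Bdd M [Act.send y] := by
  intro π hπ i j
  rcases prefix_cons_cases hπ with rfl | ⟨π', rfl, hp⟩
  · simp [sentOn_nil]
  · rw [List.prefix_nil.1 hp, sentOn_cons, sentOn_send, sentOn_nil]
    by_cases h : M.src y = i ∧ M.dst y = j <;> simp [h]

/-- SHAPE 1 : `syncOf u ++ !x ++ syncOf w ++ !y` -/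
theorem shape1_fifo_bdd (u w : List ℕ) (x y : ℕ)
    (hw : ∀ b ∈ w, M.src b ≠ M.src x) (hy : M.src y ≠ M.src x) :
    Fifo M (syncOf u ++ (Act.send x :: (syncOf w ++ [Act.send y]))) ∧
    Bdd M (syncOf u ++ (Act.send x :: (syncOf w ++ [Act.send y]))) := by
  have hno : ∀ α ∈ syncOf w ++ [Act.send y], M.src α.msg ≠ M.src x := by
    intro α hα
    rcases List.mem_append.1 hα with h | h
    · exact hw α.msg (mem_syncOf h)
    · rcases List.mem_cons.1 h with rfl | h'
      · exact hy
      · simp at h'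
  have hfin : Fifo M (syncOf w ++ [Act.send y]) :=
    fifo_append (fifo_syncOf w) (bal_syncOf w) (fifo_single_send y)
  have hbin : Bdd M (syncOf w ++ [Act.send y]) :=
    bdd_append (bdd_syncOf w) (bal_syncOf w) (bdd_single_send y)
  exact ⟨fifo_append (fifo_syncOf u) (bal_syncOf u) (fifo_send_cons hno hfin),
    bdd_append (bdd_syncOf u) (bal_syncOf u) (bdd_send_cons hno hbin)⟩

/-- The swap window. -/
def win (x y : ℕ) : Trace := [Act.send y, Act.send x, Act.recv x, Act.recv y]

theorem bal_win {x y : ℕ} (hxy : M.src x ≠ M.src y) : Bal M (win x y) := by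
  intro i j
  by_cases hx : M.src x = i ∧ M.dst x = j <;> by_cases hy : M.src y = i ∧ M.dst y = j
  · exact absurd (hx.1.trans hy.1.symm) hxy
  all_goals simp [win, sentOn_cons_send, sentOn_cons_recv, recvOn_cons_send, recvOn_cons_recv,
    sentOn_nil, recvOn_nil, hx, hy]

theorem fifo_win {x y : ℕ} (hxy : M.src x ≠ M.src y) : Fifo M (win x y) := by
  intro π hπ i j
  by_cases hx : M.src x = i ∧ M.dst x = j <;> by_cases hy : M.src y = i ∧ M.dst y = j
  · exact absurd (hx.1.trans hy.1.symm) hxy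
  all_goals {
    rcases prefix_cons_cases hπ with rfl | ⟨π1, rfl, hp1⟩
    · simp [recvOn_nil]
    rcases prefix_cons_cases hp1 with rfl | ⟨π2, rfl, hp2⟩
    · simp [sentOn_cons_send, sentOn_cons_recv, recvOn_cons_send, recvOn_cons_recv,
        sentOn_nil, recvOn_nil, hx, hy]
    rcases prefix_cons_cases hp2 with rfl | ⟨π3, rfl, hp3⟩
    · simp [sentOn_cons_send, sentOn_cons_recv, recvOn_cons_send, recvOn_cons_recv,
        sentOn_nil, recvOn_nil, hx, hy]
    rcases prefix_cons_cases hp3 with rfl | ⟨π4, rfl, hp4⟩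
    · simp [sentOn_cons_send, sentOn_cons_recv, recvOn_cons_send, recvOn_cons_recv,
        sentOn_nil, recvOn_nil, hx, hy]
    rw [List.prefix_nil.1 hp4]
    simp [sentOn_cons_send, sentOn_cons_recv, recvOn_cons_send, recvOn_cons_recv,
      sentOn_nil, recvOn_nil, hx, hy] }

theorem bdd_win {x y : ℕ} (hxy : M.src x ≠ M.src y) : Bdd M (win x y) := by
  intro π hπ i j
  by_cases hx : M.src x = i ∧ M.dst x = j <;> by_cases hy : M.src y = i ∧ M.dst y = j
  · exact absurd (hx.1.trans hy.1.symm) hxy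
  all_goals {
    rcases prefix_cons_cases hπ with rfl | ⟨π1, rfl, hp1⟩
    · simp [sentOn_nil, recvOn_nil]
    rcases prefix_cons_cases hp1 with rfl | ⟨π2, rfl, hp2⟩
    · simp [sentOn_cons_send, sentOn_cons_recv, recvOn_cons_send, recvOn_cons_recv,
        sentOn_nil, recvOn_nil, hx, hy]
    rcases prefix_cons_cases hp2 with rfl | ⟨π3, rfl, hp3⟩
    · simp [sentOn_cons_send, sentOn_cons_recv, recvOn_cons_send, recvOn_cons_recv,
        sentOn_nil, recvOn_nil, hx, hy]
    rcases prefix_cons_cases hp3 with rfl | ⟨π4, rfl, hp4⟩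
    · simp [sentOn_cons_send, sentOn_cons_recv, recvOn_cons_send, recvOn_cons_recv,
        sentOn_nil, recvOn_nil, hx, hy]
    rw [List.prefix_nil.1 hp4]
    simp [sentOn_cons_send, sentOn_cons_recv, recvOn_cons_send, recvOn_cons_recv,
      sentOn_nil, recvOn_nil, hx, hy] }

theorem shape2_fifo_bdd_bal (A B : List ℕ) (x y : ℕ) (hxy : M.src x ≠ M.src y) :
    Fifo M (syncOf A ++ (win x y ++ syncOf B)) ∧
    Bdd M (syncOf A ++ (win x y ++ syncOf B)) ∧
    Bal M (syncOf A ++ (win x y ++ syncOf B)) :=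
  ⟨fifo_append (fifo_syncOf A) (bal_syncOf A)
      (fifo_append (fifo_win hxy) (bal_win hxy) (fifo_syncOf B)),
    bdd_append (bdd_syncOf A) (bal_syncOf A)
      (bdd_append (bdd_win hxy) (bal_win hxy) (bdd_syncOf B)),
    bal_append (bal_syncOf A) (bal_append (bal_win hxy) (bal_syncOf B))⟩

end Shapes
section Projections

variable {M : MessageSet} {S : System}

theorem projPeer_syncOf_append (i : ℕ) (u v : List ℕ) :
    projPeer M i (syncOf (u ++ v)) = projPeer M i (syncOf u) ++ projPeer M i (syncOf v) := by
  rw [syncOf_append, projPeer_append]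

theorem proj_shape1_src (u w : List ℕ) (x y : ℕ)
    (hxd : M.src x ≠ M.dst x) (hxy : M.src y ≠ M.src x) :
    projPeer M (M.src x) (syncOf u ++ (Act.send x :: (syncOf w ++ [Act.send y]))) =
      projPeer M (M.src x) (syncOf (u ++ x :: w)) := by
  rw [projPeer_append, projPeer_cons, projPeer_append, projPeer_send, projPeer_send,
    if_pos rfl, if_neg hxy, projPeer_syncOf_append, projPeer_syncOf_cons, pjx,
    if_pos rfl, if_neg (fun h => hxd h.symm)]
  simp

theorem proj_shape1_other (u w : List ℕ) (x y : ℕ) (i : ℕ) (hi : M.src x ≠ i) :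
    projPeer M i (syncOf u ++ (Act.send x :: (syncOf w ++ [Act.send y]))) <+:
      projPeer M i (syncOf (u ++ (w ++ [y]))) := by
  rw [projPeer_append, projPeer_cons, projPeer_append, projPeer_send, projPeer_send,
    if_neg hi, projPeer_syncOf_append, projPeer_syncOf_append, projPeer_syncOf_cons]
  have h1 : (if M.src y = i then [Act.send y] else []) <+: pjx M i y := by
    rw [pjx]
    exact List.prefix_append _ _
  have h2 : projPeer M i (syncOf ([] : List ℕ)) = [] := rfl
  simp only [h2, List.append_nil, List.nil_append, List.append_assoc]
  exact prefix_append_left (prefix_append_left h1)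

theorem proj_win (x y i : ℕ) (hxd : M.src x ≠ M.dst x) (hyd : M.src y ≠ M.dst y)
    (hxy : M.src x ≠ M.src y) :
    projPeer M i (win x y) =
      if M.src y = i ∧ M.dst x = i then projPeer M i (syncOf [y, x])
      else projPeer M i (syncOf [x, y]) := by
  by_cases h1 : M.src y = i <;> by_cases h2 : M.src x = i <;>
    by_cases h3 : M.dst x = i <;> by_cases h4 : M.dst y = i
  all_goals first
    | exact absurd (h2.trans h1.symm) hxy
    | exact absurd (h2.trans h3.symm) hxd
    | exact absurd (h1.trans h4.symm) hyd
    | simp [win, syncOf, projPeer, peerOf, h1, h2, h3, h4]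

theorem proj_shape2 (A B : List ℕ) (x y i : ℕ) (hxd : M.src x ≠ M.dst x)
    (hyd : M.src y ≠ M.dst y) (hxy : M.src x ≠ M.src y) :
    projPeer M i (syncOf A ++ (win x y ++ syncOf B)) =
      if M.src y = i ∧ M.dst x = i then projPeer M i (syncOf (A ++ y :: x :: B))
      else projPeer M i (syncOf (A ++ x :: y :: B)) := by
  have key := proj_win (M := M) x y i hxd hyd hxy
  by_cases h : M.src y = i ∧ M.dst x = i
  · rw [if_pos h] at key ⊢
    rw [projPeer_append, projPeer_append, key]
    have hl : (A ++ y :: x :: B) = A ++ ([y, x] ++ B) := by simp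
    rw [hl, projPeer_syncOf_append, projPeer_syncOf_append]
  · rw [if_neg h] at key ⊢
    rw [projPeer_append, projPeer_append, key]
    have hl : (A ++ x :: y :: B) = A ++ ([x, y] ++ B) := by simp
    rw [hl, projPeer_syncOf_append, projPeer_syncOf_append]

theorem sendProj_cons_send (x : ℕ) (τ : Trace) :
    sendProj (Act.send x :: τ) = x :: sendProj τ := by
  simp [sendProj]

theorem sendProj_cons_recv (x : ℕ) (τ : Trace) :
    sendProj (Act.recv x :: τ) = sendProj τ := by
  simp [sendProj]

theorem sendProj_nil : sendProj [] = [] := rfl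

theorem sendProj_shape1 (u w : List ℕ) (x y : ℕ) :
    sendProj (syncOf u ++ (Act.send x :: (syncOf w ++ [Act.send y]))) =
      u ++ x :: (w ++ [y]) := by
  simp only [sendProj_append, sendProj_syncOf, sendProj_cons_send, sendProj_nil]

theorem sendProj_shape2 (A B : List ℕ) (x y : ℕ) :
    sendProj (syncOf A ++ (win x y ++ syncOf B)) = A ++ y :: x :: B := by
  simp only [win, sendProj_append, sendProj_syncOf, sendProj_cons_send,
    sendProj_cons_recv, sendProj_nil]
  simp

end Projections
section Existence

variable {M : MessageSet} {S : System}

theorem core1 (hsync : kSync M S 1) (hM : M.WF) (u : List ℕ) (x : ℕ) (hx : x ∈ M.msgs)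
    (h1 : TraceOf M S (syncOf (u ++ [x]))) :
    ∀ v, (∀ b ∈ v, M.src b ≠ M.src x) → TraceOf M S (syncOf (u ++ v)) →
      TraceOf M S (syncOf (u ++ x :: v)) := by
  have hxd : M.src x ≠ M.dst x := (hM.2 x hx).1
  intro v
  induction v using List.reverseRecOn with
  | nil => intro _ _; simpa using h1
  | append_singleton w y ih =>
    intro hsx h2
    have hsx' : ∀ b ∈ w, M.src b ≠ M.src x := fun b hb => hsx b (List.mem_append_left _ hb)
    have hy : M.src y ≠ M.src x := hsx y (by simp)
    have h2' : TraceOf M S (syncOf (u ++ w)) := by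
      apply traceOf_syncOf_prefix (B := [y])
      rw [List.append_assoc]
      exact h2
    have hWk : TraceOf M S (syncOf (u ++ x :: w)) := ih hsx' h2'
    have hshape := shape1_fifo_bdd (M := M) u w x y hsx' hy
    have hruns : ∀ i, ∃ s,
        LRun S i (S.init i)
          (projPeer M i (syncOf u ++ (Act.send x :: (syncOf w ++ [Act.send y])))) s := by
      intro i
      by_cases hi : M.src x = i
      · subst hi
        rw [proj_shape1_src u w x y hxd hy]
        exact runs_of_traceOf hWk (M.src x)
      · obtain ⟨s, hs⟩ := runs_of_traceOf h2 i
        exact LRun.of_prefix (proj_shape1_other u w x y i hi) hs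
    choose q hq using hruns
    have hT : TraceOf M S (syncOf u ++ (Act.send x :: (syncOf w ++ [Act.send y]))) :=
      ⟨_, exec_char_mpr hshape.1 hq⟩
    have hres := oracle_inl hsync hT ⟨hshape.1, hshape.2⟩
    rw [sendProj_shape1] at hres
    exact hres

theorem master_e (hsync : kSync M S 1) (hM : M.WF) :
    ∀ {l₁ l₂ l₃ : List ℕ}, NShuffle l₁ l₂ l₃ →
    (∀ a ∈ l₁, a ∈ M.msgs) → (∀ b ∈ l₂, b ∈ M.msgs) →
    (∀ a ∈ l₁, ∀ b ∈ l₂, M.src a ≠ M.src b) →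
    ∀ u, TraceOf M S (syncOf (u ++ l₁)) → TraceOf M S (syncOf (u ++ l₂)) →
    TraceOf M S (syncOf (u ++ l₃)) := by
  intro l₁ l₂ l₃ hsh
  induction hsh with
  | nil =>
    intro _ _ _ u h1 _
    simpa using h1
  | @left l₁' l₂' l₃' a hsh' ih =>
    intro hm1 hm2 hsrc u h1 h2
    have ha : a ∈ M.msgs := hm1 a (List.mem_cons_self)
    have h1a : TraceOf M S (syncOf (u ++ [a])) := by
      apply traceOf_syncOf_prefix (B := l₁')
      rw [List.append_assoc]
      simpa using h1
    have h2' : TraceOf M S (syncOf ((u ++ [a]) ++ l₂')) := by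
      rw [List.append_assoc]
      simp only [List.singleton_append]
      exact core1 hsync hM u a ha h1a l₂'
        (fun b hb => (hsrc a (List.mem_cons_self) b hb).symm) h2
    have h1' : TraceOf M S (syncOf ((u ++ [a]) ++ l₁')) := by
      rw [List.append_assoc]
      simpa using h1
    have hres := ih (fun a' h => hm1 a' (List.mem_cons_of_mem _ h)) hm2
      (fun a' h b hb => hsrc a' (List.mem_cons_of_mem _ h) b hb) (u ++ [a]) h1' h2'
    rw [List.append_assoc] at hres
    simpa using hres
  | @right l₁' l₂' l₃' b hsh' ih =>
    intro hm1 hm2 hsrc u h1 h2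
    have hb : b ∈ M.msgs := hm2 b (List.mem_cons_self)
    have h2b : TraceOf M S (syncOf (u ++ [b])) := by
      apply traceOf_syncOf_prefix (B := l₂')
      rw [List.append_assoc]
      simpa using h2
    have h1' : TraceOf M S (syncOf ((u ++ [b]) ++ l₁')) := by
      rw [List.append_assoc]
      simp only [List.singleton_append]
      exact core1 hsync hM u b hb h2b l₁'
        (fun a ha => hsrc a ha b (List.mem_cons_self)) h1
    have h2' : TraceOf M S (syncOf ((u ++ [b]) ++ l₂')) := by
      rw [List.append_assoc]
      simpa using h2
    have hres := ih hm1 (fun b' h => hm2 b' (List.mem_cons_of_mem _ h))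
      (fun a' h b' hb' => hsrc a' h b' (List.mem_cons_of_mem _ hb')) (u ++ [b]) h1' h2'
    rw [List.append_assoc] at hres
    simpa using hres

end Existence
section Tags

inductive MTag : List Bool → List ℕ → List ℕ → List ℕ → Prop
  | nil : MTag [] [] [] []
  | left {t : List Bool} {l₁ l₂ w : List ℕ} (a : ℕ) :
      MTag t l₁ l₂ w → MTag (true :: t) (a :: l₁) l₂ (a :: w)
  | right {t : List Bool} {l₁ l₂ w : List ℕ} (b : ℕ) :
      MTag t l₁ l₂ w → MTag (false :: t) l₁ (b :: l₂) (b :: w)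

theorem mtag_of_nshuffle {l₁ l₂ w : List ℕ} (h : NShuffle l₁ l₂ w) :
    ∃ t, MTag t l₁ l₂ w := by
  induction h with
  | nil => exact ⟨[], MTag.nil⟩
  | left a h ih => obtain ⟨t, ht⟩ := ih; exact ⟨true :: t, MTag.left a ht⟩
  | right b h ih => obtain ⟨t, ht⟩ := ih; exact ⟨false :: t, MTag.right b ht⟩

theorem nshuffle_of_mtag {t : List Bool} {l₁ l₂ w : List ℕ} (h : MTag t l₁ l₂ w) :
    NShuffle l₁ l₂ w := by
  induction h with
  | nil => exact NShuffle.nil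
  | left a _ ih => exact NShuffle.left a ih
  | right b _ ih => exact NShuffle.right b ih

theorem nshuffle_append : ∀ l₁ l₂ : List ℕ, NShuffle l₁ l₂ (l₁ ++ l₂)
  | [], l₂ => by
      induction l₂ with
      | nil => exact NShuffle.nil
      | cons b l ih => exact NShuffle.right b ih
  | (a :: l₁), l₂ => NShuffle.left a (nshuffle_append l₁ l₂)

def invT : List Bool → ℕ
  | [] => 0
  | true :: t => invT t
  | false :: t => t.count true + invT t

theorem mtag_count {t : List Bool} {l₁ l₂ w : List ℕ} (h : MTag t l₁ l₂ w) :
    t.count true = l₁.length := by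
  induction h with
  | nil => rfl
  | left a _ ih => simp [List.count_cons, ih]
  | right b _ ih => simp [List.count_cons, ih]

theorem mtag_inv_zero {t : List Bool} {l₁ l₂ w : List ℕ} (h : MTag t l₁ l₂ w)
    (h0 : invT t = 0) : w = l₁ ++ l₂ := by
  induction h with
  | nil => rfl
  | left a h ih =>
    simp only [invT] at h0
    simp [ih h0]
  | @right t' l₁' l₂' w' b h ih =>
    simp only [invT] at h0
    have hc : t'.count true = 0 ∧ invT t' = 0 := by omega
    have hl : l₁'.length = 0 := by rw [← mtag_count h]; exact hc.1
    have hl' : l₁' = [] := List.length_eq_zero_iff.1 hl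
    subst hl'
    simp [ih hc.2]

theorem mtag_decomp {t : List Bool} {l₁ l₂ w : List ℕ} (h : MTag t l₁ l₂ w)
    (hne : invT t ≠ 0) :
    ∃ t' α β x y, MTag t' l₁ l₂ (α ++ x :: y :: β) ∧ w = α ++ y :: x :: β ∧
      x ∈ l₁ ∧ y ∈ l₂ ∧ invT t' < invT t := by
  induction h with
  | nil => exact absurd rfl hne
  | @left t l₁ l₂ w a h ih =>
    have hne' : invT t ≠ 0 := by simpa [invT] using hne
    obtain ⟨t', α, β, x, y, hm, hw, hx, hy, hlt⟩ := ih hne'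
    exact ⟨true :: t', a :: α, β, x, y, MTag.left a hm, by rw [hw]; rfl,
      List.mem_cons_of_mem _ hx, hy, by simpa [invT] using hlt⟩
  | @right t l₁ l₂ w b h ih =>
    by_cases h0 : invT t = 0
    · cases t with
      | nil =>
        exfalso
        apply hne
        simp [invT]
      | cons b' t'' =>
        cases b' with
        | false =>
          exfalso
          apply hne
          simp only [invT, List.count_cons] at h0 ⊢
          simp at h0 ⊢
          omega
        | true =>
          cases h with
          | left x h'' =>
            refine ⟨true :: false :: t'', [], _, x, b, ?_, rfl,
              List.mem_cons_self, List.mem_cons_self, ?_⟩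
            · exact MTag.left x (MTag.right b h'')
            · simp only [invT, List.count_cons]
              simp
    · obtain ⟨t', α, β, x, y, hm, hw, hx, hy, hlt⟩ := ih h0
      refine ⟨false :: t', b :: α, β, x, y, MTag.right b hm, by rw [hw]; rfl,
        hx, List.mem_cons_of_mem _ hy, ?_⟩
      have hc : t'.count true = t.count true := by rw [mtag_count hm, mtag_count h]
      simp only [invT, hc]
      omega

end Tags
section StepIncl

variable {M : MessageSet} {S : System}

theorem step_incl (hsync : kSync M S 1) (hM : M.WF)
    {u α β : List ℕ} {x y : ℕ}
    (hx : x ∈ M.msgs) (hy : y ∈ M.msgs) (hxy : M.src x ≠ M.src y)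
    (hex1 : TraceOf M S (syncOf (u ++ (α ++ x :: y :: β))))
    (hex2 : TraceOf M S (syncOf (u ++ (α ++ y :: x :: β))))
    {i : ℕ} {s : ℕ} (hcond : ¬(M.src y = i ∧ M.dst x = i))
    (hr : LRun S i (S.init i) (projPeer M i (syncOf (u ++ (α ++ x :: y :: β)))) s) :
    LRun S i (S.init i) (projPeer M i (syncOf (u ++ (α ++ y :: x :: β)))) s := by
  have hxd := (hM.2 x hx).1
  have hyd := (hM.2 y hy).1
  have hW := shape2_fifo_bdd_bal (M := M) (u ++ α) β x y hxy
  have hassoc1 : (u ++ α) ++ x :: y :: β = u ++ (α ++ x :: y :: β) := by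
    rw [List.append_assoc]
  have hassoc2 : (u ++ α) ++ y :: x :: β = u ++ (α ++ y :: x :: β) := by
    rw [List.append_assoc]
  have hruns : ∀ j, ∃ s', LRun S j (S.init j)
      (projPeer M j (syncOf (u ++ α) ++ (win x y ++ syncOf β))) s' := by
    intro j
    rw [proj_shape2 (u ++ α) β x y j hxd hyd hxy]
    by_cases hj : M.src y = j ∧ M.dst x = j
    · rw [if_pos hj, hassoc2]
      exact runs_of_traceOf hex2 j
    · rw [if_neg hj, hassoc1]
      exact runs_of_traceOf hex1 j
  choose q0 hq0 using hruns
  have hqruns : ∀ j, LRun S j (S.init j)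
      (projPeer M j (syncOf (u ++ α) ++ (win x y ++ syncOf β)))
      (Function.update q0 i s j) := by
    intro j
    by_cases hj : j = i
    · rw [hj, Function.update_self]
      rw [proj_shape2 (u ++ α) β x y i hxd hyd hxy, if_neg hcond, hassoc1]
      exact hr
    · rw [Function.update_of_ne hj]
      exact hq0 j
  have hexec := exec_char_mpr (S := S) hW.1 hqruns
  rw [bufOf_bal hW.2.2] at hexec
  have hstable : Stable ((Function.update q0 i s, fun _ _ => []) : Config) := fun _ _ => rfl
  have hsrun := oracle_inr hsync hexec ⟨hW.1, hW.2.1⟩ hstable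
  rw [sendProj_shape2] at hsrun
  have hchar := (exec_char_mp hsrun).2.1 i
  have hqi : ((Function.update q0 i s, fun _ _ => ([] : List ℕ)) : Config).1 i = s := by
    show Function.update q0 i s i = s
    exact Function.update_self i s q0
  rw [hqi] at hchar
  rw [← hassoc2]
  exact hchar

theorem incl_main (hsync : kSync M S 1) (hM : M.WF)
    {l₁ l₂ : List ℕ}
    (hm1 : ∀ a ∈ l₁, a ∈ M.msgs) (hm2 : ∀ b ∈ l₂, b ∈ M.msgs)
    (hsrc : ∀ a ∈ l₁, ∀ b ∈ l₂, M.src a ≠ M.src b)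
    (u : List ℕ)
    (h1 : TraceOf M S (syncOf (u ++ l₁))) (h2 : TraceOf M S (syncOf (u ++ l₂))) :
    ∀ n t l₃, invT t = n → MTag t l₁ l₂ l₃ →
      (∀ i s, ¬(∃ b ∈ l₂, M.src b = i) →
        LRun S i (S.init i) (projPeer M i (syncOf (u ++ (l₁ ++ l₂)))) s →
        LRun S i (S.init i) (projPeer M i (syncOf (u ++ l₃))) s) ∧
      (∀ i s, ¬(∃ a ∈ l₁, M.src a = i) →
        LRun S i (S.init i) (projPeer M i (syncOf (u ++ l₃))) s →
        LRun S i (S.init i) (projPeer M i (syncOf (u ++ (l₁ ++ l₂)))) s) := by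
  intro n
  induction n using Nat.strong_induction_on with
  | _ n ih =>
    intro t l₃ hn hm
    by_cases h0 : invT t = 0
    · have hl : l₃ = l₁ ++ l₂ := mtag_inv_zero hm h0
      subst hl
      exact ⟨fun i s _ hr => hr, fun i s _ hr => hr⟩
    · obtain ⟨t', α, β, x, y, hm', hw, hxl, hyl, hlt⟩ := mtag_decomp hm h0
      subst hw
      have hx := hm1 x hxl
      have hy := hm2 y hyl
      have hxy : M.src x ≠ M.src y := hsrc x hxl y hyl
      have hex1 : TraceOf M S (syncOf (u ++ (α ++ x :: y :: β))) :=
        master_e hsync hM (nshuffle_of_mtag hm') hm1 hm2 hsrc u h1 h2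
      have hex2 : TraceOf M S (syncOf (u ++ (α ++ y :: x :: β))) :=
        master_e hsync hM (nshuffle_of_mtag hm) hm1 hm2 hsrc u h1 h2
      obtain ⟨F', B'⟩ := ih (invT t') (hn ▸ hlt) t' (α ++ x :: y :: β) rfl hm'
      constructor
      · intro i s hP2 hr
        have hcond : ¬(M.src y = i ∧ M.dst x = i) := fun hc => hP2 ⟨y, hyl, hc.1⟩
        exact step_incl hsync hM hx hy hxy hex1 hex2 hcond (F' i s hP2 hr)
      · intro i s hP1 hr
        have hcond : ¬(M.src x = i ∧ M.dst y = i) := fun hc => hP1 ⟨x, hxl, hc.1⟩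
        exact B' i s hP1 (step_incl hsync hM hy hx hxy.symm hex2 hex1 hcond hr)

end StepIncl
/-- Lemma 4.6: blocks of synchronous exchanges from disjoint
sources can be shuffled arbitrarily. -/
theorem sync_blocks_shuffle (M : MessageSet) (S : System)
    (hM : M.WF) (hS : S.WF M) (hfin : S.FiniteDelta)
    (hsync : kSync M S 1)
    (τ : Trace) (hτ : Trk M S 0 τ)
    (l₁ l₂ : List ℕ)
    (hmem₁ : ∀ a ∈ l₁, a ∈ M.msgs) (hmem₂ : ∀ b ∈ l₂, b ∈ M.msgs)
    (hsrc : ∀ a ∈ l₁, ∀ b ∈ l₂, M.src a ≠ M.src b)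
    (h1 : Trk M S 0 (τ ++ syncOf l₁))
    (h2 : Trk M S 0 (τ ++ syncOf l₂)) :
    ∀ l₃, NShuffle l₁ l₂ l₃ →
      Trk M S 0 (τ ++ syncOf l₃) ∧
      SEquiv M S (τ ++ syncOf (l₁ ++ l₂)) (τ ++ syncOf l₃) := by
  classical
  obtain ⟨hτT, hτS⟩ := hτ
  obtain ⟨w, rfl⟩ := hτS
  intro l₃ hsh
  have h1' : TraceOf M S (syncOf (w ++ l₁)) := by
    rw [syncOf_append]; exact h1.1
  have h2' : TraceOf M S (syncOf (w ++ l₂)) := by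
    rw [syncOf_append]; exact h2.1
  have hex3 : TraceOf M S (syncOf (w ++ l₃)) :=
    master_e hsync hM hsh hmem₁ hmem₂ hsrc w h1' h2'
  have hex12 : TraceOf M S (syncOf (w ++ (l₁ ++ l₂))) :=
    master_e hsync hM (nshuffle_append l₁ l₂) hmem₁ hmem₂ hsrc w h1' h2'
  constructor
  · constructor
    · rw [← syncOf_append]
      exact hex3
    · exact ⟨w ++ l₃, (syncOf_append w l₃).symm⟩
  · obtain ⟨t, ht⟩ := mtag_of_nshuffle hsh
    obtain ⟨F, B⟩ := incl_main hsync hM hmem₁ hmem₂ hsrc w h1' h2' (invT t) t l₃ rfl ht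
    have hne12 := runs_of_traceOf hex12
    have hne3 := runs_of_traceOf hex3
    set m : ℕ → ℕ := fun i =>
      if h : ∃ b ∈ l₂, M.src b = i then Classical.choose (hne3 i)
      else Classical.choose (hne12 i) with hmdef
    have hm3 : ∀ i, LRun S i (S.init i) (projPeer M i (syncOf (w ++ l₃))) (m i) := by
      intro i
      simp only [hmdef]
      by_cases h : ∃ b ∈ l₂, M.src b = i
      · rw [dif_pos h]
        exact Classical.choose_spec (hne3 i)
      · rw [dif_neg h]
        exact F i _ h (Classical.choose_spec (hne12 i))
    have hm12 : ∀ i, LRun S i (S.init i)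
        (projPeer M i (syncOf (w ++ (l₁ ++ l₂)))) (m i) := by
      intro i
      simp only [hmdef]
      by_cases h : ∃ b ∈ l₂, M.src b = i
      · rw [dif_pos h]
        have hP1 : ¬(∃ a ∈ l₁, M.src a = i) := by
          rintro ⟨a, ha, hai⟩
          obtain ⟨b, hbl, hbi⟩ := h
          exact hsrc a ha b hbl (hai.trans hbi.symm)
        exact B i _ hP1 (Classical.choose_spec (hne3 i))
      · rw [dif_neg h]
        exact Classical.choose_spec (hne12 i)
    refine ⟨(m, fun _ _ => []), ?_, ?_⟩
    · have hx := exec_char_mpr (S := S) (fifo_syncOf (w ++ (l₁ ++ l₂))) hm12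
      rw [bufOf_bal (bal_syncOf _)] at hx
      rw [show syncOf w ++ syncOf (l₁ ++ l₂) = syncOf (w ++ (l₁ ++ l₂)) from
        (syncOf_append _ _).symm]
      exact hx
    · have hx := exec_char_mpr (S := S) (fifo_syncOf (w ++ l₃)) hm3
      rw [bufOf_bal (bal_syncOf _)] at hx
      rw [show syncOf w ++ syncOf l₃ = syncOf (w ++ l₃) from (syncOf_append _ _).symm]
      exact hx
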